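/- arXiv:1910.03553 — 7 statements merged into one kernel-verified Lean document; each statement's English description precedes it below -/
import Mathlib

section
/- For any two anonymized histograms h1 and h2, the minimum of Σ_{x∈ℕ} |D1(x) − D2(x)| over all finitely supported labeled datasets D1, D2 : ℕ → ℕ whose multisets of nonzero values equal h1 and h2 respectively, equals the sorted ℓ1 distance Σ_{i≥1} |n_(i)(h1) − n_(i)(h2)|. -/
/-- The `i`-th largest element (0-indexed) of a finite multiset of naturals,
taken to be `0` when `i` exceeds the number of elements. -/
def nthLargest (h : Multiset ℕ) (i : ℕ) : ℕ :=
  ((h.sort (· ≤ ·)).reverse).getD i 0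

/-- The sorted ℓ1 distance `Σ_{i≥1} |n_(i)(h1) − n_(i)(h2)|` between two
anonymized histograms.  All terms with `i ≥ h1.card + h2.card` vanish, so the
finite sum below equals the infinite sum. -/
def sortedL1 (h1 h2 : Multiset ℕ) : ℕ :=
  ∑ i ∈ Finset.range (h1.card + h2.card),
    ((nthLargest h1 i : ℤ) - (nthLargest h2 i : ℤ)).natAbs

/-- The anonymized histogram of a finitely supported labeled dataset
`D : ℕ → ℕ`: the multiset of its nonzero values. -/
def histOf (D : ℕ →₀ ℕ) : Multiset ℕ :=
  D.support.val.map ⇑D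

/-- The ℓ1 distance `Σ_{x∈ℕ} |D1(x) − D2(x)|` between two labeled datasets. -/
def datasetDist (D1 D2 : ℕ →₀ ℕ) : ℕ :=
  ∑ x ∈ D1.support ∪ D2.support, ((D1 x : ℤ) - (D2 x : ℤ)).natAbs

/-!
Layer-cake decomposition: `|a - b| = Σ_t |[t < a] - [t < b]|`. Summing over labels and
exchanging the sums turns `Σ_x |D₁ x - D₂ x|` into `Σ_t Σ_x |[t < D₁ x] - [t < D₂ x]|`, and by the
triangle inequality the inner sum is at least `|c₁ t - c₂ t|`, where `cⱼ t` is the number of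
elements of the histogram `hⱼ` exceeding `t`. Since the `i`-th largest element of `h` exceeds `t`
iff `i < c t`, the same decomposition shows that the sorted distance equals `Σ_t |c₁ t - c₂ t|`
exactly. It is attained by writing both histograms in decreasing order on the labels `0, 1, …`.
-/

open Finset

lemma sum_range_natAbs_ite_sub_ite (a b N : ℕ) :
    ∑ t ∈ range N, ((if t < a then (1 : ℤ) else 0) - if t < b then 1 else 0).natAbs
      = ((min a N : ℕ) - (min b N : ℕ) : ℤ).natAbs := by
  induction N with
  | zero => simp
  | succ n ih =>
    rw [sum_range_succ, ih]
    split_ifs <;> omega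

lemma natAbs_sub_eq_sum_range {a b N : ℕ} (ha : a ≤ N) (hb : b ≤ N) :
    ((a : ℤ) - b).natAbs
      = ∑ t ∈ range N, ((if t < a then (1 : ℤ) else 0) - if t < b then 1 else 0).natAbs := by
  rw [sum_range_natAbs_ite_sub_ite, min_eq_left ha, min_eq_left hb]

lemma List.lt_getD_iff_lt_countP {l : List ℕ} (hl : l.Pairwise (· ≥ ·)) (t i : ℕ) :
    t < l.getD i 0 ↔ i < l.countP (t < ·) := by
  induction l generalizing i with
  | nil => simp
  | cons a l ih =>
    obtain ⟨ha, hl⟩ := List.pairwise_cons.mp hl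
    by_cases hta : t < a
    · cases i <;> simp only [List.getD_cons_zero, List.getD_cons_succ, List.countP_cons, ih hl, hta]
        <;> simp
    · have hzero : l.countP (t < ·) = 0 :=
        List.countP_eq_zero.mpr fun x hx => by simpa using (ha x hx).trans (not_lt.mp hta)
      cases i <;> simp only [List.getD_cons_zero, List.getD_cons_succ, List.countP_cons, ih hl, hta,
        hzero] <;> simp

lemma List.map_getD_range_length (l : List ℕ) : (List.range l.length).map (l.getD · 0) = l :=
  List.ext_getElem (by simp) fun i _ hi => by simp [hi]

lemma lt_nthLargest_iff (h : Multiset ℕ) (t i : ℕ) :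
    t < nthLargest h i ↔ i < h.countP (t < ·) := by
  have hsorted : ((h.sort (· ≤ ·)).reverse).Pairwise (· ≥ ·) :=
    List.pairwise_reverse.mpr (h.pairwise_sort _)
  rw [nthLargest, List.lt_getD_iff_lt_countP hsorted, List.countP_reverse, ← Multiset.coe_countP,
    Multiset.sort_eq]

lemma nthLargest_le {h : Multiset ℕ} {M : ℕ} (hM : ∀ a ∈ h, a ≤ M) (i : ℕ) :
    nthLargest h i ≤ M := by
  by_contra! hlt
  have := (lt_nthLargest_iff h M i).mp hlt
  rw [Multiset.countP_eq_zero.mpr fun a ha => (hM a ha).not_gt] at this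
  exact Nat.not_lt_zero _ this

lemma nthLargest_eq_zero {h : Multiset ℕ} {i : ℕ} (hi : h.card ≤ i) : nthLargest h i = 0 := by
  by_contra hne
  have := (lt_nthLargest_iff h 0 i).mp (Nat.pos_of_ne_zero hne)
  exact absurd (this.trans_le (Multiset.countP_le_card _ _)) (not_lt.mpr hi)

lemma sortedL1_eq_sum_range_countP {h1 h2 : Multiset ℕ} {N : ℕ}
    (hN1 : ∀ a ∈ h1, a ≤ N) (hN2 : ∀ a ∈ h2, a ≤ N) :
    sortedL1 h1 h2 = ∑ t ∈ range N, ((h1.countP (t < ·) : ℤ) - h2.countP (t < ·)).natAbs := by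
  calc sortedL1 h1 h2
      = ∑ i ∈ range (h1.card + h2.card), ∑ t ∈ range N,
          ((if t < nthLargest h1 i then (1 : ℤ) else 0)
            - if t < nthLargest h2 i then 1 else 0).natAbs :=
        sum_congr rfl fun i _ => natAbs_sub_eq_sum_range (nthLargest_le hN1 i) (nthLargest_le hN2 i)
    _ = ∑ t ∈ range N, ∑ i ∈ range (h1.card + h2.card),
          ((if i < h1.countP (t < ·) then (1 : ℤ) else 0)
            - if i < h2.countP (t < ·) then 1 else 0).natAbs := by
        rw [sum_comm]
        simp only [lt_nthLargest_iff]
    _ = _ := sum_congr rfl fun t _ => (natAbs_sub_eq_sum_range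
        ((Multiset.countP_le_card _ _).trans (Nat.le_add_right _ _))
        ((Multiset.countP_le_card _ _).trans (Nat.le_add_left _ _))).symm

lemma apply_le_sum_histOf (D : ℕ →₀ ℕ) (x : ℕ) : D x ≤ (histOf D).sum := by
  by_cases hx : x ∈ D.support
  · exact Multiset.le_sum_of_mem (Multiset.mem_map_of_mem _ hx)
  · simp [Finsupp.notMem_support_iff.mp hx]

lemma countP_histOf_eq_sum {D : ℕ →₀ ℕ} {S : Finset ℕ} (hS : D.support ⊆ S) (t : ℕ) :
    ((histOf D).countP (t < ·) : ℤ) = ∑ x ∈ S, if t < D x then 1 else 0 := by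
  rw [← sum_subset hS fun x _ hx => by simp [Finsupp.notMem_support_iff.mp hx], sum_boole,
    histOf, Multiset.countP_map]
  rfl

lemma datasetDist_eq_sum_of_support_subset {D1 D2 : ℕ →₀ ℕ} {S : Finset ℕ}
    (h1 : D1.support ⊆ S) (h2 : D2.support ⊆ S) :
    datasetDist D1 D2 = ∑ x ∈ S, ((D1 x : ℤ) - D2 x).natAbs :=
  sum_subset (union_subset h1 h2) fun x _ hx => by
    simp only [mem_union, Finsupp.mem_support_iff, not_or, not_not] at hx
    simp [hx.1, hx.2]

lemma sortedL1_histOf_le_datasetDist (D1 D2 : ℕ →₀ ℕ) :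
    sortedL1 (histOf D1) (histOf D2) ≤ datasetDist D1 D2 := by
  set S := D1.support ∪ D2.support
  set N := (histOf D1).sum + (histOf D2).sum
  have hN1 (x : ℕ) : D1 x ≤ N := (apply_le_sum_histOf D1 x).trans (Nat.le_add_right _ _)
  have hN2 (x : ℕ) : D2 x ≤ N := (apply_le_sum_histOf D2 x).trans (Nat.le_add_left _ _)
  calc sortedL1 (histOf D1) (histOf D2)
      = ∑ t ∈ range N,
          (((histOf D1).countP (t < ·) : ℤ) - (histOf D2).countP (t < ·)).natAbs :=
        sortedL1_eq_sum_range_countP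
          (fun _ ha => (Multiset.le_sum_of_mem ha).trans (Nat.le_add_right _ _))
          (fun _ ha => (Multiset.le_sum_of_mem ha).trans (Nat.le_add_left _ _))
    _ = ∑ t ∈ range N, (∑ x ∈ S,
          ((if t < D1 x then (1 : ℤ) else 0) - if t < D2 x then 1 else 0)).natAbs := by
        refine sum_congr rfl fun t _ => ?_
        rw [countP_histOf_eq_sum (subset_union_left : D1.support ⊆ S),
          countP_histOf_eq_sum (subset_union_right : D2.support ⊆ S), sum_sub_distrib]
    _ ≤ ∑ t ∈ range N, ∑ x ∈ S,
          ((if t < D1 x then (1 : ℤ) else 0) - if t < D2 x then 1 else 0).natAbs :=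
        sum_le_sum fun t _ => Int.natAbs_sum_le _ _
    _ = datasetDist D1 D2 := by
        rw [sum_comm, datasetDist]
        exact sum_congr rfl fun x _ => (natAbs_sub_eq_sum_range (hN1 x) (hN2 x)).symm

noncomputable def sortedDataset (h : Multiset ℕ) : ℕ →₀ ℕ :=
  Finsupp.onFinset (range h.card) (nthLargest h) fun _ hi =>
    mem_range.mpr (not_le.mp fun hle => hi (nthLargest_eq_zero hle))

lemma histOf_sortedDataset {h : Multiset ℕ} (hp : ∀ a ∈ h, 0 < a) :
    histOf (sortedDataset h) = h := by
  have hsupp : (sortedDataset h).support = range h.card := by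
    rw [sortedDataset, Finsupp.support_onFinset]
    refine filter_true_of_mem fun i hi => Nat.pos_iff_ne_zero.mp ?_
    rw [lt_nthLargest_iff, Multiset.countP_eq_card.mpr hp]
    exact mem_range.mp hi
  have hsorted := List.map_getD_range_length (h.sort (· ≤ ·)).reverse
  rw [List.length_reverse, Multiset.length_sort] at hsorted
  calc histOf (sortedDataset h) = ((h.sort (· ≤ ·)).reverse : Multiset ℕ) := by
        rw [histOf, hsupp, ← hsorted]; rfl
    _ = h := by rw [Multiset.coe_reverse, Multiset.sort_eq]

lemma datasetDist_sortedDataset (h1 h2 : Multiset ℕ) :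
    datasetDist (sortedDataset h1) (sortedDataset h2) = sortedL1 h1 h2 :=
  datasetDist_eq_sum_of_support_subset
    (Finsupp.support_onFinset_subset.trans (range_subset_range.mpr (Nat.le_add_right _ _)))
    (Finsupp.support_onFinset_subset.trans (range_subset_range.mpr (Nat.le_add_left _ _)))

/-- The minimum of `Σ_x |D1(x) − D2(x)|` over labeled datasets `D1, D2` whose
anonymized histograms are `h1` and `h2` equals the sorted ℓ1 distance. -/
theorem min_dataset_dist_eq_sortedL1 (h1 h2 : Multiset ℕ)
    (hp1 : ∀ a ∈ h1, 0 < a) (hp2 : ∀ a ∈ h2, 0 < a) :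
    IsLeast {d : ℕ | ∃ D1 D2 : ℕ →₀ ℕ,
        histOf D1 = h1 ∧ histOf D2 = h2 ∧ d = datasetDist D1 D2}
      (sortedL1 h1 h2) := by
  refine ⟨⟨sortedDataset h1, sortedDataset h2, histOf_sortedDataset hp1, histOf_sortedDataset hp2,
    (datasetDist_sortedDataset h1 h2).symm⟩, ?_⟩
  rintro d ⟨D1, D2, rfl, rfl, rfl⟩
  exact sortedL1_histOf_le_datasetDist D1 D2
end

section
/- For any two anonymized histograms h1 and h2, the sorted ℓ1 distance is bounded by the ℓ1 distance of cumulative prevalences: ℓ1(h1, h2) ≤ Σ_{r≥1} |φ_{r+}(h1) − φ_{r+}(h2)|. -/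
/-- The prevalence `φ_r(h)`: the number of elements of `h` equal to `r`. -/
def prevalence (h : Multiset ℕ) (r : ℕ) : ℕ := h.count r

/-- The cumulative prevalence `φ_{r+}(h) = Σ_{s≥r} φ_s(h)`: the number of
elements of `h` that are at least `r`. -/
def cumPrevalence (h : Multiset ℕ) (r : ℕ) : ℕ := (h.filter (fun a => r ≤ a)).card

/-!
Think of a histogram as the Young diagram of cells `(i, r)` with `1 ≤ r ≤ n_(i+1)(h)`: its row
lengths are the `n_(i)(h)` and its column lengths are the `φ_{r+}(h)`. Rows and columns of a
diagram are left- resp. top-justified, so for two diagrams the row-`i` (resp. column-`r`)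
cells of their symmetric difference number exactly `|n_(i)(h1) − n_(i)(h2)|` (resp.
`|φ_{r+}(h1) − φ_{r+}(h2)|`). Counting the symmetric difference by rows and by columns shows
that the two sides are in fact equal.
-/

open Finset

lemma List.getD_mem_or_eq_default {α : Type*} (l : List α) (i : ℕ) (d : α) :
    l.getD i d ∈ l ∨ l.getD i d = d := by
  rcases lt_or_ge i l.length with hi | hi
  · exact .inl (l.getD_eq_getElem d hi ▸ l.getElem_mem hi)
  · exact .inr (l.getD_eq_default d hi)

/-- In a nonincreasing list, the entries `≥ r` form an initial segment. -/
lemma List.le_getD_iff_lt_length_filter {l : List ℕ} (hl : l.Pairwise (· ≥ ·)) {r : ℕ}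
    (hr : 0 < r) (i : ℕ) : r ≤ l.getD i 0 ↔ i < (l.filter (r ≤ ·)).length := by
  induction l generalizing i with
  | nil => simp only [List.getD_nil, List.filter_nil, List.length_nil]; omega
  | cons a t ih =>
    obtain ⟨ha, ht⟩ := List.pairwise_cons.mp hl
    by_cases hra : r ≤ a
    · rw [List.filter_cons_of_pos (by simpa using hra)]
      cases i with
      | zero => simpa using hra
      | succ j => simpa using ih ht j
    · have hlt : ∀ b ∈ a :: t, b < r := by
        simp only [List.mem_cons, forall_eq_or_imp]
        exact ⟨by omega, fun b hb => by have := ha b hb; omega⟩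
      have hget : (a :: t).getD i 0 < r := by
        rcases (a :: t).getD_mem_or_eq_default i 0 with hmem | hzero
        · exact hlt _ hmem
        · rwa [hzero]
      rw [List.filter_eq_nil_iff.mpr (by simpa using hlt), List.length_nil]
      omega

lemma le_nthLargest_iff_lt_cumPrevalence (h : Multiset ℕ) {r : ℕ} (hr : 0 < r) (i : ℕ) :
    r ≤ nthLargest h i ↔ i < cumPrevalence h r := by
  have hsorted : ((h.sort (· ≤ ·)).reverse).Pairwise (· ≥ ·) :=
    List.pairwise_reverse.mpr (Multiset.pairwise_sort h _)
  have hcard : cumPrevalence h r = ((h.sort (· ≤ ·)).filter (r ≤ ·)).length := by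
    conv_lhs => rw [cumPrevalence, ← Multiset.sort_eq h (· ≤ ·)]
    rw [Multiset.filter_coe, Multiset.coe_card]
  rw [nthLargest, List.le_getD_iff_lt_length_filter hsorted hr, hcard, List.filter_reverse,
    List.length_reverse]

lemma nthLargest_le_sum (h : Multiset ℕ) (i : ℕ) : nthLargest h i ≤ h.sum := by
  rcases ((h.sort (· ≤ ·)).reverse).getD_mem_or_eq_default i 0 with hmem | hzero
  · rw [List.mem_reverse, Multiset.mem_sort] at hmem
    exact Multiset.le_sum_of_mem hmem
  · rw [nthLargest, hzero]
    exact Nat.zero_le _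

lemma cumPrevalence_le_card (h : Multiset ℕ) (r : ℕ) : cumPrevalence h r ≤ h.card :=
  Multiset.card_le_card (Multiset.filter_le _ _)

lemma card_filter_lt_ne_lt {X : Finset ℕ} {m n : ℕ} (hX : Ico (min m n) (max m n) ⊆ X) :
    #{x ∈ X | (x < m) ≠ (x < n)} = ((m : ℤ) - n).natAbs := by
  have : {x ∈ X | (x < m) ≠ (x < n)} = Ico (min m n) (max m n) := by
    ext x
    simp only [mem_filter, mem_Ico, ne_eq, eq_iff_iff]
    exact ⟨fun hx => by omega, fun hx => ⟨hX (mem_Ico.mpr hx), by omega⟩⟩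
  rw [this, Nat.card_Ico]
  omega

theorem sortedL1_eq_cumPrevalence_dist (h1 h2 : Multiset ℕ) :
    sortedL1 h1 h2 = ∑ r ∈ Icc 1 (h1.sum + h2.sum),
      ((cumPrevalence h1 r : ℤ) - (cumPrevalence h2 r : ℤ)).natAbs := by
  set K := h1.card + h2.card
  set N := h1.sum + h2.sum
  -- `R i r`: the cell `(i, r)` lies in exactly one of the two Young diagrams
  let R : ℕ → ℕ → Prop := fun i r => (r ≤ nthLargest h1 i) ≠ (r ≤ nthLargest h2 i)
  have hrows : ∀ i ∈ range K, #((Icc 1 N).bipartiteAbove R i) =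
      ((nthLargest h1 i : ℤ) - nthLargest h2 i).natAbs := by
    intro i _
    have := nthLargest_le_sum h1 i
    have := nthLargest_le_sum h2 i
    simp only [bipartiteAbove, R, ← Nat.lt_succ_iff]
    rw [card_filter_lt_ne_lt]
    · omega
    · intro x hx
      simp only [mem_Ico, mem_Icc] at hx ⊢
      omega
  have hcols : ∀ r ∈ Icc 1 N, #((range K).bipartiteBelow R r) =
      ((cumPrevalence h1 r : ℤ) - cumPrevalence h2 r).natAbs := by
    intro r hr
    have := cumPrevalence_le_card h1 r
    have := cumPrevalence_le_card h2 r
    simp only [bipartiteBelow, R, le_nthLargest_iff_lt_cumPrevalence _ (mem_Icc.mp hr).1]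
    rw [card_filter_lt_ne_lt]
    intro x hx
    simp only [mem_Ico, mem_range] at hx ⊢
    omega
  rw [sortedL1, ← sum_congr rfl hrows, sum_card_bipartiteAbove_eq_sum_card_bipartiteBelow,
    sum_congr rfl hcols]

theorem sortedL1_le_cumPrevalence_dist_general (h1 h2 : Multiset ℕ) :
    sortedL1 h1 h2 ≤
      ∑ r ∈ Finset.Icc 1 (h1.sum + h2.sum),
        ((cumPrevalence h1 r : ℤ) - (cumPrevalence h2 r : ℤ)).natAbs :=
  (sortedL1_eq_cumPrevalence_dist h1 h2).le

/-- The sorted ℓ1 distance is bounded by the ℓ1 distance of cumulative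
prevalences: `ℓ1(h1, h2) ≤ Σ_{r≥1} |φ_{r+}(h1) − φ_{r+}(h2)|`.  All terms with
`r > h1.sum + h2.sum` vanish, so the finite sum below equals the infinite
sum. -/
theorem sortedL1_le_cumPrevalence_dist (h1 h2 : Multiset ℕ)
    (hp1 : ∀ a ∈ h1, 0 < a) (hp2 : ∀ a ∈ h2, 0 < a) :
    sortedL1 h1 h2 ≤
      ∑ r ∈ Finset.Icc 1 (h1.sum + h2.sum),
        ((cumPrevalence h1 r : ℤ) - (cumPrevalence h2 r : ℤ)).natAbs :=
  sortedL1_le_cumPrevalence_dist_general h1 h2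
end

section
/- Let Z be an integer-valued random variable with E[Z] = 0 and E[Z²] < ∞, let n be a positive integer, and let Y = max(n + Z, 0). Then E[(1/Y)·1_{Y > 0}] ≤ 1/n + E[Z²]/n². -/
open MeasureTheory

/-- If `Z` is an integer random variable with `E[Z] = 0` and finite second
moment, `n ≥ 1` an integer, and `Y = max(n + Z, 0)`, then
`E[(1/Y)·1_{Y>0}] ≤ 1/n + E[Z²]/n²`. -/
theorem inv_max_expectation_le {Ω : Type*} [MeasurableSpace Ω]
    (μ : Measure Ω) [IsProbabilityMeasure μ]
    (Z : Ω → ℤ) (hmeas : Measurable Z)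
    (hint : Integrable (fun ω => (Z ω : ℝ)) μ)
    (hmean : ∫ ω, (Z ω : ℝ) ∂μ = 0)
    (hint2 : Integrable (fun ω => (Z ω : ℝ) ^ 2) μ)
    (n : ℕ) (hn : 0 < n)
    (Y : Ω → ℤ) (hY : ∀ ω, Y ω = max ((n : ℤ) + Z ω) 0) :
    ∫ ω, (if 0 < Y ω then (1 : ℝ) / (Y ω : ℝ) else 0) ∂μ ≤
      1 / (n : ℝ) + (∫ ω, (Z ω : ℝ) ^ 2 ∂μ) / (n : ℝ) ^ 2 := by
  set N : ℝ := (n : ℝ) with hNdef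
  have hN : (1 : ℝ) ≤ N := by
    have : 1 ≤ n := hn
    show (1 : ℝ) ≤ (n : ℝ)
    exact_mod_cast this
  have hN0 : (0 : ℝ) < N := by linarith
  have hg : Integrable (fun ω => 1 / N - (Z ω : ℝ) / N ^ 2 + (Z ω : ℝ) ^ 2 / N ^ 2) μ :=
    ((integrable_const _).sub (hint.div_const _)).add (hint2.div_const _)
  have hle : ∫ ω, (if 0 < Y ω then (1 : ℝ) / (Y ω : ℝ) else 0) ∂μ ≤
      ∫ ω, (1 / N - (Z ω : ℝ) / N ^ 2 + (Z ω : ℝ) ^ 2 / N ^ 2) ∂μ := by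
    apply integral_mono_of_nonneg
    · filter_upwards with ω
      by_cases h : 0 < Y ω
      · simp only [if_pos h]
        have : (0 : ℝ) < (Y ω : ℝ) := by exact_mod_cast h
        positivity
      · simp [if_neg h]
    · exact hg
    · filter_upwards with ω
      set z : ℝ := (Z ω : ℝ) with hz
      by_cases h : 0 < Y ω
      · have hpos : (0 : ℤ) < (n : ℤ) + Z ω := by
          have h' := h; rw [hY ω] at h'
          rcases lt_max_iff.mp h' with h'' | h''
          · exact h''
          · exact absurd h'' (lt_irrefl _)
        have h1 : (1 : ℝ) ≤ N + z := by
          have : (1 : ℤ) ≤ (n : ℤ) + Z ω := hpos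
          show (1 : ℝ) ≤ (n : ℝ) + (Z ω : ℝ)
          exact_mod_cast this
        have hyr : (Y ω : ℝ) = N + z := by
          rw [hY ω, max_eq_left hpos.le]; push_cast; ring
        rw [if_pos h, hyr, div_le_iff₀ (by linarith : (0:ℝ) < N + z)]
        have e : (1 / N - z / N ^ 2 + z ^ 2 / N ^ 2) * (N + z)
            = 1 + z ^ 2 * (N + z - 1) / N ^ 2 := by
          field_simp; ring
        rw [e]
        have hnn : 0 ≤ z ^ 2 * (N + z - 1) / N ^ 2 :=
          div_nonneg (mul_nonneg (sq_nonneg z) (by linarith)) (by positivity)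
        linarith
      · rw [if_neg h]
        have hle0 : (n : ℤ) + Z ω ≤ 0 := by
          by_contra hc
          push_neg at hc
          exact h (by rw [hY ω]; exact lt_max_iff.mpr (Or.inl hc))
        have hzle : z ≤ -N := by
          have : Z ω ≤ -(n : ℤ) := by linarith
          show (Z ω : ℝ) ≤ -(n : ℝ)
          exact_mod_cast this
        have h1 : 0 ≤ 1 / N := by positivity
        have h2 : z / N ^ 2 ≤ 0 :=
          div_nonpos_of_nonpos_of_nonneg (by linarith) (by positivity)
        have h3 : 0 ≤ z ^ 2 / N ^ 2 := by positivity
        linarith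
  have hcalc : ∫ ω, (1 / N - (Z ω : ℝ) / N ^ 2 + (Z ω : ℝ) ^ 2 / N ^ 2) ∂μ
      = 1 / N + (∫ ω, (Z ω : ℝ) ^ 2 ∂μ) / N ^ 2 := by
    have h1 : ∫ ω, ((1 / N - (Z ω : ℝ) / N ^ 2) + (Z ω : ℝ) ^ 2 / N ^ 2) ∂μ
        = (∫ ω, (1 / N - (Z ω : ℝ) / N ^ 2) ∂μ) + ∫ ω, (Z ω : ℝ) ^ 2 / N ^ 2 ∂μ :=
      integral_add ((integrable_const _).sub (hint.div_const _)) (hint2.div_const _)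
    have h2 : ∫ ω, ((1 / N : ℝ) - (Z ω : ℝ) / N ^ 2) ∂μ
        = (∫ _ω, (1 / N : ℝ) ∂μ) - ∫ ω, (Z ω : ℝ) / N ^ 2 ∂μ :=
      integral_sub (integrable_const _) (hint.div_const _)
    rw [h1, h2, integral_div, integral_div, hmean, integral_const]
    simp [integral_div]
  rw [hcalc] at hle
  exact hle
end

section
/- (Dataset dependent composition.) Let D be a type with a neighbor relation, let Ω1, …, Ωn and S1, …, Sn be countable types, let μi be a probability mass function on Ωi for each i, and let f1 : D × Ω1 → S1 and fi : S_{i−1} × Ωi → Si for 2 ≤ i ≤ n. For a dataset x and z = (z1, …, z_{i−1}), let x_{i−1}(x, z) denote the deterministic state obtained by applying f1, …, f_{i−1} with noise values z1, …, z_{i−1} (with x_0(x) = x). Define the random process X1 = f1(x, Z1), Xi = fi(X_{i−1}, Zi), where Z1, …, Zn are independent with Zi distributed according to μi. Suppose ε ≥ 0 and for every pair of neighboring datasets x, x' there exists an index i ∈ {1, …, n} such that for all z1 ∈ Ω1, …, z_{i−1} ∈ Ω_{i−1} and all s ∈ Si, Pr_{Zi∼μi}[fi(x_{i−1}(x, z),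 Zi) = s] ≤ e^ε · Pr_{Zi∼μi}[fi(x_{i−1}(x', z), Zi) = s]. Then for every pair of neighboring datasets x, x' and every s ∈ Sn, Pr[Xn = s | input x] ≤ e^ε · Pr[Xn = s | input x'], i.e., the release of Xn is ε-differentially private. -/
open scoped ENNReal

/-- The deterministic state `x_i(x, z)` obtained by applying the deterministic
functions `f1 = f0` and `f_{i+1} = f i` with noise values `z 0, …, z i`,
starting from the dataset `x`. -/
def detState {D : Type*} {Ω S : ℕ → Type*}
    (f0 : D → Ω 0 → S 0) (f : ∀ i, S i → Ω (i + 1) → S (i + 1))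
    (x : D) (z : ∀ j, Ω j) : ∀ i, S i
  | 0 => f0 x (z 0)
  | (i + 1) => f i (detState f0 f x z i) (z (i + 1))

/-- The distribution of the single step producing `X_i`, conditioned on the
previous noise values `z 0, …, z (i-1)` (the deterministic previous state),
with fresh noise `Z_i ∼ μ i`. -/
noncomputable def stepDist {D : Type*} {Ω S : ℕ → Type*}
    (μ : ∀ i, PMF (Ω i))
    (f0 : D → Ω 0 → S 0) (f : ∀ i, S i → Ω (i + 1) → S (i + 1))
    (x : D) (z : ∀ j, Ω j) : ∀ i, PMF (S i)
  | 0 => (μ 0).map (f0 x)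
  | (i + 1) => (μ (i + 1)).map (f i (detState f0 f x z i))

/-- The distribution of the random process
`X_0 = f0(x, Z_0)`, `X_{i+1} = f i (X_i, Z_{i+1})`
with independent noises `Z_i ∼ μ i`, on input dataset `x`. -/
noncomputable def processDist {D : Type*} {Ω S : ℕ → Type*}
    (μ : ∀ i, PMF (Ω i))
    (f0 : D → Ω 0 → S 0) (f : ∀ i, S i → Ω (i + 1) → S (i + 1))
    (x : D) : ∀ i, PMF (S i)
  | 0 => (μ 0).map (f0 x)
  | (i + 1) => (processDist μ f0 f x i).bind fun s => (μ (i + 1)).map (f i s)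

open scoped Classical

section Aux

lemma tsum_map_mul' {A B : Type*} (p : PMF A) (g : A → B) (G : B → ℝ≥0∞) :
    ∑' b, (p.map g) b * G b = ∑' a, p a * G (g a) := by
  simp only [PMF.map_apply]
  calc ∑' b, (∑' a, if b = g a then p a else 0) * G b
      = ∑' b, ∑' a, (if b = g a then p a else 0) * G b :=
        tsum_congr fun b => ENNReal.tsum_mul_right.symm
    _ = ∑' a, ∑' b, (if b = g a then p a else 0) * G b := ENNReal.tsum_comm
    _ = ∑' a, p a * G (g a) := by
        refine tsum_congr fun a => ?_
        rw [tsum_eq_single (g a) (by intro b hb; simp [hb])]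
        simp

lemma tsum_bind_mul' {A B : Type*} (p : PMF A) (κ : A → PMF B) (G : B → ℝ≥0∞) :
    ∑' b, (p.bind κ) b * G b = ∑' a, p a * ∑' b, κ a b * G b := by
  simp only [PMF.bind_apply]
  calc ∑' b, (∑' a, p a * κ a b) * G b
      = ∑' b, ∑' a, p a * κ a b * G b :=
        tsum_congr fun b => ENNReal.tsum_mul_right.symm
    _ = ∑' a, ∑' b, p a * κ a b * G b := ENNReal.tsum_comm
    _ = ∑' a, p a * ∑' b, κ a b * G b := by
        refine tsum_congr fun a => ?_
        rw [← ENNReal.tsum_mul_left]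
        simp [mul_assoc]

end Aux

section Main

variable {D : Type*} {Ω S : ℕ → Type*}
  (f0 : D → Ω 0 → S 0) (f : ∀ i, S i → Ω (i + 1) → S (i + 1))

lemma detState_congr (x : D) (z z' : ∀ j, Ω j) :
    ∀ i, (∀ j ≤ i, z j = z' j) → detState f0 f x z i = detState f0 f x z' i
  | 0, h => by simp [detState, h 0 le_rfl]
  | (i+1), h => by
      simp only [detState]
      rw [detState_congr x z z' i (fun j hj => h j (hj.trans (Nat.le_succ i))),
        h (i+1) le_rfl]

lemma key (μ : ∀ i, PMF (Ω i)) (x x' : D) (c : ℝ≥0∞) (z₀ : ∀ j, Ω j) :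
    ∀ (i : ℕ) (G G' : S i → ℝ≥0∞),
      (∀ z : ∀ j, Ω j, G (detState f0 f x z i) ≤ c * G' (detState f0 f x' z i)) →
      ∑' t, processDist μ f0 f x i t * G t ≤
        c * ∑' t, processDist μ f0 f x' i t * G' t := by
  intro i
  induction i with
  | zero =>
    intro G G' h
    show ∑' t, ((μ 0).map (f0 x)) t * G t ≤ c * ∑' t, ((μ 0).map (f0 x')) t * G' t
    rw [tsum_map_mul', tsum_map_mul', ← ENNReal.tsum_mul_left]
    refine ENNReal.tsum_le_tsum fun w => ?_
    have := h (Function.update z₀ 0 w)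
    simp only [detState, Function.update_self] at this
    calc μ 0 w * G (f0 x w) ≤ μ 0 w * (c * G' (f0 x' w)) :=
          mul_le_mul_right this _
      _ = c * (μ 0 w * G' (f0 x' w)) := by ring
  | succ i ih =>
    intro G G' h
    show ∑' t, ((processDist μ f0 f x i).bind _) t * G t ≤
      c * ∑' t, ((processDist μ f0 f x' i).bind _) t * G' t
    rw [tsum_bind_mul', tsum_bind_mul']
    simp only [tsum_map_mul']
    refine ih _ _ fun z => ?_
    rw [← ENNReal.tsum_mul_left]
    refine ENNReal.tsum_le_tsum fun w => ?_
    have hz := h (Function.update z (i+1) w)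
    have hxz : detState f0 f x (Function.update z (i+1) w) i = detState f0 f x z i :=
      detState_congr f0 f x _ z i fun j hj =>
        Function.update_of_ne (by omega) _ _
    have hxz' : detState f0 f x' (Function.update z (i+1) w) i = detState f0 f x' z i :=
      detState_congr f0 f x' _ z i fun j hj =>
        Function.update_of_ne (by omega) _ _
    simp only [detState, hxz, hxz', Function.update_self] at hz
    calc μ (i+1) w * G (f i (detState f0 f x z i) w)
        ≤ μ (i+1) w * (c * G' (f i (detState f0 f x' z i) w)) :=
          mul_le_mul_right hz _
      _ = c * (μ (i+1) w * G' (f i (detState f0 f x' z i) w)) := by ring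

lemma mono_step (μ : ∀ i, PMF (Ω i)) (x x' : D) (c : ℝ≥0∞) (i : ℕ)
    (h : ∀ s, processDist μ f0 f x i s ≤ c * processDist μ f0 f x' i s) :
    ∀ s, processDist μ f0 f x (i+1) s ≤ c * processDist μ f0 f x' (i+1) s := by
  intro s
  show ((processDist μ f0 f x i).bind _) s ≤ c * ((processDist μ f0 f x' i).bind _) s
  rw [PMF.bind_apply, PMF.bind_apply, ← ENNReal.tsum_mul_left]
  refine ENNReal.tsum_le_tsum fun u => ?_
  calc processDist μ f0 f x i u * ((μ (i+1)).map (f i u)) s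
      ≤ (c * processDist μ f0 f x' i u) * ((μ (i+1)).map (f i u)) s :=
        mul_le_mul_left (h u) _
    _ = c * (processDist μ f0 f x' i u * ((μ (i+1)).map (f i u)) s) := by ring

end Main

/-- Dataset dependent composition theorem: if for every pair of neighboring
datasets there is some step `i` at which, for every fixing of the previous
noise values, the single-step output distribution satisfies the
`ε`-differential-privacy likelihood-ratio bound, then the release of the final
state `X_n` is `ε`-differentially private. -/
theorem dataset_dependent_composition {D : Type*}
    (Neighbor : D → D → Prop) (n : ℕ)
    (Ω S : ℕ → Type*) [∀ i, Countable (Ω i)] [∀ i, Countable (S i)]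
    (μ : ∀ i, PMF (Ω i))
    (f0 : D → Ω 0 → S 0) (f : ∀ i, S i → Ω (i + 1) → S (i + 1))
    (ε : ℝ) (hε : 0 ≤ ε)
    (hstep : ∀ x x', Neighbor x x' → ∃ i ≤ n, ∀ z : ∀ j, Ω j, ∀ s : S i,
      stepDist μ f0 f x z i s ≤
        ENNReal.ofReal (Real.exp ε) * stepDist μ f0 f x' z i s)
    (x x' : D) (hx : Neighbor x x') (s : S n) :
    processDist μ f0 f x n s ≤
      ENNReal.ofReal (Real.exp ε) * processDist μ f0 f x' n s := by
  obtain ⟨i0, hi0n, hi0⟩ := hstep x x' hx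
  set c := ENNReal.ofReal (Real.exp ε) with hc
  have z₀ : ∀ j, Ω j := fun j => ((μ j).support_nonempty).some
  -- bound at step i0
  have base : ∀ t, processDist μ f0 f x i0 t ≤ c * processDist μ f0 f x' i0 t := by
    intro t
    cases i0 with
    | zero => exact hi0 z₀ t
    | succ k =>
      show ((processDist μ f0 f x k).bind _) t ≤ c * ((processDist μ f0 f x' k).bind _) t
      rw [PMF.bind_apply, PMF.bind_apply]
      exact key f0 f μ x x' c z₀ k
        (fun u => ((μ (k+1)).map (f k u)) t)
        (fun u => ((μ (k+1)).map (f k u)) t)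
        (fun z => hi0 z t)
  -- propagate to n
  have prop : ∀ m, ∀ t, processDist μ f0 f x (i0 + m) t ≤
      c * processDist μ f0 f x' (i0 + m) t := by
    intro m
    induction m with
    | zero => exact base
    | succ m ih => exact mono_step f0 f μ x x' c (i0 + m) ih
  obtain ⟨m, rfl⟩ : ∃ m, n = i0 + m := ⟨n - i0, (Nat.add_sub_cancel' hi0n).symm⟩
  exact prop m s
end

section
/- Let k ≥ 1, ε > 0, and let M assign to each x ∈ {0,1}^k a Borel probability measure M(x) on ℝ^k such that for all x, y ∈ {0,1}^k with Σ_{i=1}^k |x_i − y_i| ≤ 1 and every Borel set S ⊆ ℝ^k, M(x)(S) ≤ e^ε · M(y)(S). Then there exists x ∈ {0,1}^k such that ∫ Σ_{i=1}^k |x_i − w_i| dM(x)(w) ≥ (k/2)·e^{−ε}. -/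
/-!
Flipping coordinate `i` of `x` gives a neighbour `x'`, and every `w` lies at distance at least
`1` in coordinate `i` from one of `x, x'`. Integrating this against `M x` and transferring the
`x'`-part to `M x'` via `M x ≤ e^ε • M x'` shows that the expected `i`-th coordinate errors of
`M x` and `M x'` sum to at least `e^{-ε}`. Averaging over all `x` and all
`i` (each flip is an involution of `{0,1}^k`) gives an input whose expected error is at least
`(k/2)·e^{-ε}`.
-/

open MeasureTheory Finset
open scoped ENNReal

theorem inv_le_lintegral_add_lintegral_of_le_smul {α : Type*} [MeasurableSpace α]
    {μ ν : Measure α} [IsProbabilityMeasure μ] {c : ℝ≥0∞} (hc : 1 ≤ c) (hμν : μ ≤ c • ν)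
    {f g : α → ℝ≥0∞} (hg : Measurable g) (hfg : ∀ a, 1 ≤ f a + g a) :
    c⁻¹ ≤ ∫⁻ a, f a ∂μ + ∫⁻ a, g a ∂ν := by
  rcases eq_or_ne c ∞ with rfl | hc_top
  · simp
  rw [ENNReal.inv_le_iff_le_mul (fun _ => (zero_lt_one.trans_le hc).ne') (absurd · hc_top)]
  calc (1 : ℝ≥0∞) = ∫⁻ _, 1 ∂μ := by simp
    _ ≤ ∫⁻ a, f a + g a ∂μ := lintegral_mono hfg
    _ = ∫⁻ a, f a ∂μ + ∫⁻ a, g a ∂μ := lintegral_add_right _ hg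
    _ ≤ ∫⁻ a, f a ∂μ + c * ∫⁻ a, g a ∂ν := by
      gcongr
      simpa only [lintegral_smul_measure, smul_eq_mul] using lintegral_mono' hμν le_rfl
    _ ≤ c * (∫⁻ a, f a ∂μ + ∫⁻ a, g a ∂ν) := by
      rw [mul_add]
      gcongr
      exact le_mul_of_one_le_left' hc

theorem exists_card_mul_le_two_mul_sum_of_le_add_involutive {ι κ : Type*} [Fintype ι]
    [Nonempty ι] [Fintype κ] (σ : κ → ι → ι) (hσ : ∀ j, Function.Involutive (σ j))
    (f : ι → κ → ℝ≥0∞) (c : ℝ≥0∞) (h : ∀ x j, c ≤ f x j + f (σ j x) j) :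
    ∃ x, Fintype.card κ * c ≤ 2 * ∑ j, f x j := by
  by_contra! hlt
  have hpair : ∀ j, ∑ x, (f x j + f (σ j x) j) = 2 * ∑ x, f x j := fun j => by
    rw [sum_add_distrib, two_mul]
    exact congrArg _ (Equiv.sum_comp ((hσ j).toPerm _) (f · j))
  have := calc ∑ _x : ι, Fintype.card κ * c
      = ∑ j : κ, ∑ _x : ι, c := by simp [mul_left_comm]
    _ ≤ ∑ j, ∑ x, (f x j + f (σ j x) j) := by gcongr with j _ x _; exact h x j
    _ = ∑ x, 2 * ∑ j, f x j := by simp only [hpair, ← mul_sum, sum_comm (γ := κ)]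
    _ < ∑ _x : ι, Fintype.card κ * c :=
      ENNReal.sum_lt_sum_of_nonempty univ_nonempty fun x _ => hlt x
  exact this.false

theorem one_le_ofReal_abs_sub_add_ofReal_abs_sub_not (b : Bool) (t : ℝ) :
    1 ≤ ENNReal.ofReal |(if b then (1 : ℝ) else 0) - t|
      + ENNReal.ofReal |(if !b then (1 : ℝ) else 0) - t| := by
  rw [← ENNReal.ofReal_add (abs_nonneg _) (abs_nonneg _), ← ENNReal.ofReal_one]
  refine ENNReal.ofReal_le_ofReal ?_
  calc (1 : ℝ) = |(if b then (1 : ℝ) else 0) - (if !b then (1 : ℝ) else 0)| := by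
        cases b <;> simp
    _ ≤ _ := (abs_sub_le _ t _).trans_eq (by rw [abs_sub_comm t])

theorem sum_abs_sub_update_not {ι : Type*} [Fintype ι] [DecidableEq ι] (x : ι → Bool) (i : ι) :
    ∑ j, |(if x j then (1 : ℝ) else 0) - (if Function.update x i (!x i) j then 1 else 0)| = 1 := by
  rw [sum_eq_single i (fun j _ hj => by simp [Function.update_of_ne hj]) (by simp)]
  cases x i <;> simp

theorem binary_vector_dp_lower_bound_general (k : ℕ) (ε : ℝ) (hε : 0 < ε)
    (M : (Fin k → Bool) → Measure (Fin k → ℝ))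
    (hprob : ∀ x, IsProbabilityMeasure (M x))
    (hdp : ∀ x y : Fin k → Bool,
      (∑ i, |(if x i then (1 : ℝ) else 0) - (if y i then (1 : ℝ) else 0)|) ≤ 1 →
      ∀ S : Set (Fin k → ℝ), MeasurableSet S →
        M x S ≤ ENNReal.ofReal (Real.exp ε) * M y S) :
    ∃ x : Fin k → Bool,
      ENNReal.ofReal (((k : ℝ) / 2) * Real.exp (-ε)) ≤
        ∫⁻ w, ENNReal.ofReal (∑ i, |(if x i then (1 : ℝ) else 0) - w i|) ∂(M x) := by
  let flip (i : Fin k) (x : Fin k → Bool) := Function.update x i (!x i)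
  have flip_involutive (i : Fin k) : Function.Involutive (flip i) := fun x => by simp [flip]
  let err (x : Fin k → Bool) (i : Fin k) :=
    ∫⁻ w, ENNReal.ofReal |(if x i then (1 : ℝ) else 0) - w i| ∂(M x)
  have err_add_err_flip (x i) : ENNReal.ofReal (Real.exp (-ε)) ≤ err x i + err (flip i x) i := by
    rw [Real.exp_neg, ENNReal.ofReal_inv_of_pos (Real.exp_pos ε)]
    refine inv_le_lintegral_add_lintegral_of_le_smul
      (by simpa using Real.one_le_exp hε.le)
      (Measure.le_iff.2 (hdp x _ (sum_abs_sub_update_not x i).le)) (by fun_prop) fun w => ?_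
    simpa [flip] using one_le_ofReal_abs_sub_add_ofReal_abs_sub_not (x i) (w i)
  obtain ⟨x, hx⟩ := exists_card_mul_le_two_mul_sum_of_le_add_involutive flip flip_involutive
    err _ err_add_err_flip
  rw [Fintype.card_fin] at hx
  refine ⟨x, ?_⟩
  rw [ENNReal.ofReal_mul (by positivity), ENNReal.ofReal_div_of_pos two_pos,
    ENNReal.ofReal_natCast, ENNReal.ofReal_ofNat, ← ENNReal.mul_div_right_comm]
  refine ENNReal.div_le_of_le_mul' (hx.trans_eq ?_)
  rw [← lintegral_finsetSum _ fun i _ => by fun_prop]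
  congr 2 with w
  exact (ENNReal.ofReal_sum_of_nonneg fun i _ => abs_nonneg _).symm

/-- Lower bound for privately releasing binary vectors: if `M` is an
`ε`-differentially private mechanism on `{0,1}^k` (neighbors: vectors at
ℓ1-distance at most 1) with values Borel probability measures on `ℝ^k`, then
some input `x` incurs expected ℓ1 error at least `(k/2)·e^{−ε}`.  Here a binary
vector is represented as `x : Fin k → Bool` with real embedding
`i ↦ if x i then 1 else 0`. -/
theorem binary_vector_dp_lower_bound (k : ℕ) (hk : 1 ≤ k) (ε : ℝ) (hε : 0 < ε)
    (M : (Fin k → Bool) → Measure (Fin k → ℝ))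
    (hprob : ∀ x, IsProbabilityMeasure (M x))
    (hdp : ∀ x y : Fin k → Bool,
      (∑ i, |(if x i then (1 : ℝ) else 0) - (if y i then (1 : ℝ) else 0)|) ≤ 1 →
      ∀ S : Set (Fin k → ℝ), MeasurableSet S →
        M x S ≤ ENNReal.ofReal (Real.exp ε) * M y S) :
    ∃ x : Fin k → Bool,
      ENNReal.ofReal (((k : ℝ) / 2) * Real.exp (-ε)) ≤
        ∫⁻ w, ENNReal.ofReal (∑ i, |(if x i then (1 : ℝ) else 0) - w i|) ∂(M x) :=
  binary_vector_dp_lower_bound_general k ε hε M hprob hdp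
end

section
/- There exists a universal constant c > 0 such that for every integer n ≥ 1, every ε > 0, and every ε-differentially private mechanism M on anonymized histograms, there exists an anonymized histogram h with n ≤ Σ_{a ∈ h} a ≤ n + 1 such that E_{H ∼ M(h)}[ℓ1(h, H)] ≥ c·√n·e^{−2ε}. -/
open scoped ENNReal

/-! Assouad's method. For `T ⊆ {0, …, m-1}` let `h_T` have sorted parts `2 (m - i) + [i ∈ T]`
(`i < m`), padded with ones so that its total is exactly `n`. Raising one part and dropping one
padding `1` are single neighbour steps, so the output laws of the mechanism at `h_T` and
`h_{T ∪ {i}}` agree up to a factor `e^{2ε}`. As `|x - b| + |x - b - 1| ≥ 1`, the expected errors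
in the `i`-th sorted coordinate at these two inputs add up to at least `e^{-2ε}`; averaging over
all `T` yields some `T` with expected error at least `m e^{-2ε} / 2`, and `m` can be of order
`√n`. When `n` is too small for `m ≥ 1`, the neighbours `{n}` and `{n + 1}` give the bound with
`m` replaced by `1`. -/

open Finset

theorem nthLargest_coe_of_pairwise {L : List ℕ} (hL : L.Pairwise (· ≥ ·)) (i : ℕ) :
    nthLargest L i = L.getD i 0 := by
  have hsort : (L : Multiset ℕ).sort (· ≤ ·) = L.reverse := by
    rw [← Multiset.coe_reverse, Multiset.coe_sort]
    exact List.mergeSort_eq_self _ (List.pairwise_reverse.2 hL)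
  rw [nthLargest, hsort, List.reverse_reverse]

theorem nthLargest_map_range {f : ℕ → ℕ} (hf : Antitone f) (N i : ℕ) :
    nthLargest ((Multiset.range N).map f) i = if i < N then f i else 0 := by
  have hL : ((List.range N).map f).Pairwise (· ≥ ·) :=
    List.pairwise_map.2 ((List.pairwise_lt_range).imp fun hij => hf hij.le)
  rw [Multiset.range, Multiset.map_coe, nthLargest_coe_of_pairwise hL]
  split_ifs with h <;> simp [h]

theorem nthLargest_singleton (a i : ℕ) : nthLargest {a} i = if i = 0 then a else 0 := by
  rw [nthLargest, Multiset.sort_singleton]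
  cases i <;> simp

theorem sortedL1_eq_one_of_forall_ne {h h' : Multiset ℕ} {j : ℕ}
    (hj : j < Multiset.card h + Multiset.card h')
    (heq : ∀ i ≠ j, nthLargest h i = nthLargest h' i)
    (hdiff : ((nthLargest h j : ℤ) - nthLargest h' j).natAbs = 1) : sortedL1 h h' = 1 := by
  rw [sortedL1, sum_eq_single_of_mem j (mem_range.2 hj) fun i _ hi => by simp [heq i hi]]
  exact hdiff

theorem sum_range_natAbs_sub_le_sortedL1 {h H : Multiset ℕ} {m : ℕ} (hm : m ≤ Multiset.card h) :
    ∑ i ∈ range m, ((nthLargest h i : ℤ) - nthLargest H i).natAbs ≤ sortedL1 h H :=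
  sum_le_sum_of_subset (range_subset_range.2 (by omega))

/-- Steps of height two keep the parts sorted whatever `T` is, so `T` is visible coordinatewise
in the sorted parts. -/
def stairStep (m : ℕ) (T : Finset ℕ) (i : ℕ) : ℕ :=
  if i < m then 2 * (m - i) + if i ∈ T then 1 else 0 else 1

def staircase (m : ℕ) (T : Finset ℕ) (k : ℕ) : Multiset ℕ :=
  (Multiset.range (m + k)).map (stairStep m T)

section Staircase

variable {m k i : ℕ} {T : Finset ℕ}

theorem stairStep_antitone : Antitone (stairStep m T) := by
  intro i j hij
  rcases hij.eq_or_lt with rfl | hij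
  · rfl
  unfold stairStep
  split_ifs <;> omega

theorem card_staircase : Multiset.card (staircase m T k) = m + k := by
  simp [staircase]

theorem nthLargest_staircase :
    nthLargest (staircase m T k) i = if i < m + k then stairStep m T i else 0 :=
  nthLargest_map_range stairStep_antitone _ _

theorem staircase_pos : ∀ a ∈ staircase m T k, 0 < a := by
  simp only [staircase, Multiset.mem_map, forall_exists_index, and_imp]
  rintro _ i _ rfl
  unfold stairStep
  split_ifs <;> omega

theorem sum_range_two_mul_sub (m : ℕ) : ∑ i ∈ range m, 2 * (m - i) = m * (m + 1) := calc
  _ = ∑ j ∈ range m, 2 * (j + 1) := by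
    rw [← sum_range_reflect]
    exact sum_congr rfl fun j hj => by simp at hj; omega
  _ = m * (m + 1) := by
    induction m with
    | zero => simp
    | succ m ih => rw [sum_range_succ, ih]; ring

theorem sum_staircase (hT : T ⊆ range m) : (staircase m T k).sum = m * (m + 1) + #T + k := by
  have hmarks : ∑ i ∈ range m, (if i ∈ T then 1 else 0) = #T := by
    rw [sum_boole, Nat.cast_id, filter_mem_eq_inter, inter_eq_right.2 hT]
  change ∑ i ∈ range (m + k), stairStep m T i = _
  rw [sum_range_add, ← sum_range_two_mul_sub m, ← hmarks, ← sum_add_distrib]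
  congr 1
  · exact sum_congr rfl fun i hi => if_pos (mem_range.1 hi)
  · simp [stairStep]

theorem sortedL1_staircase_succ : sortedL1 (staircase m T k) (staircase m T (k + 1)) = 1 := by
  refine sortedL1_eq_one_of_forall_ne (j := m + k) (by rw [card_staircase, card_staircase]; omega)
    (fun i hi => ?_) ?_ <;> simp only [nthLargest_staircase]
  · split_ifs <;> omega
  · simp [stairStep]

theorem sortedL1_staircase_insert (hi : i < m) (hiT : i ∉ T) :
    sortedL1 (staircase m (insert i T) k) (staircase m T k) = 1 := by
  refine sortedL1_eq_one_of_forall_ne (j := i) (by rw [card_staircase, card_staircase]; omega)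
    (fun j hj => ?_) ?_ <;> simp only [nthLargest_staircase, stairStep]
  · simp [mem_insert, hj]
  · simp [hi, hiT, show i < m + k by omega]

end Staircase

theorem PMF.one_le_mul_tsum_add_tsum {α : Type*} {μ ν : PMF α} {C : ℝ≥0∞} (hC : 1 ≤ C)
    (hνμ : ∀ a, ν a ≤ C * μ a) {f g : α → ℝ≥0∞} (hfg : ∀ a, 1 ≤ f a + g a) :
    1 ≤ C * (∑' a, μ a * f a + ∑' a, ν a * g a) := calc
  1 = ∑' a, ν a := ν.tsum_coe.symm
  _ ≤ ∑' a, ν a * (f a + g a) := ENNReal.tsum_le_tsum fun a => le_mul_of_one_le_right' (hfg a)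
  _ = ∑' a, ν a * f a + ∑' a, ν a * g a := by simp_rw [mul_add]; exact ENNReal.tsum_add
  _ ≤ C * ∑' a, μ a * f a + C * ∑' a, ν a * g a := by
    gcongr
    · rw [← ENNReal.tsum_mul_left]
      exact ENNReal.tsum_le_tsum fun a => by
        rw [← mul_assoc]; gcongr; exact hνμ a
    · exact le_mul_of_one_le_left' hC
  _ = C * (∑' a, μ a * f a + ∑' a, ν a * g a) := (mul_add _ _ _).symm

def DifferentiallyPrivate (ε : ℝ) (M : Multiset ℕ → PMF (Multiset ℕ)) : Prop :=
  ∀ h h' : Multiset ℕ, (∀ a ∈ h, 0 < a) → (∀ a ∈ h', 0 < a) → sortedL1 h h' = 1 →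
    ∀ S : Set (Multiset ℕ),
      (M h).toOuterMeasure S ≤ ENNReal.ofReal (Real.exp ε) * (M h').toOuterMeasure S

noncomputable def expectedError (M : Multiset ℕ → PMF (Multiset ℕ)) (h : Multiset ℕ) : ℝ≥0∞ :=
  ∑' H, M h H * (sortedL1 h H : ℝ≥0∞)

noncomputable def coordError (M : Multiset ℕ → PMF (Multiset ℕ)) (h : Multiset ℕ) (i : ℕ) :
    ℝ≥0∞ :=
  ∑' H, M h H * (((nthLargest h i : ℤ) - nthLargest H i).natAbs : ℝ≥0∞)

section Mechanism

variable {ε : ℝ} {M : Multiset ℕ → PMF (Multiset ℕ)}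

theorem one_le_ofReal_exp {x : ℝ} (hx : 0 ≤ x) : 1 ≤ ENNReal.ofReal (Real.exp x) :=
  ENNReal.one_le_ofReal.2 (Real.one_le_exp hx)

theorem sum_coordError_le_expectedError {h : Multiset ℕ} {m : ℕ} (hm : m ≤ Multiset.card h) :
    ∑ i ∈ range m, coordError M h i ≤ expectedError M h := by
  simp only [coordError]
  rw [← Summable.tsum_finsetSum fun _ _ => ENNReal.summable]
  refine ENNReal.tsum_le_tsum fun H => ?_
  rw [← mul_sum]
  gcongr
  exact_mod_cast sum_range_natAbs_sub_le_sortedL1 hm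

theorem one_le_mul_coordError_add {h h' : Multiset ℕ} {C : ℝ≥0∞} (hC : 1 ≤ C)
    (hM : ∀ H, M h' H ≤ C * M h H) {i : ℕ} (hi : nthLargest h' i = nthLargest h i + 1) :
    1 ≤ C * (coordError M h i + coordError M h' i) :=
  PMF.one_le_mul_tsum_add_tsum hC hM fun H => by
    rw [hi]
    exact_mod_cast (by omega : 1 ≤ ((nthLargest h i : ℤ) - nthLargest H i).natAbs +
      (((nthLargest h i + 1 : ℕ) : ℤ) - nthLargest H i).natAbs)

theorem DifferentiallyPrivate.apply_le (hM : DifferentiallyPrivate ε M) {h h' : Multiset ℕ}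
    (hh : ∀ a ∈ h, 0 < a) (hh' : ∀ a ∈ h', 0 < a) (hhh' : sortedL1 h h' = 1) (H : Multiset ℕ) :
    M h H ≤ ENNReal.ofReal (Real.exp ε) * M h' H := by
  simpa only [PMF.toOuterMeasure_apply_singleton] using hM h h' hh hh' hhh' {H}

theorem DifferentiallyPrivate.apply_staircase_insert_le (hM : DifferentiallyPrivate ε M)
    {m i k : ℕ} {T : Finset ℕ} (hi : i < m) (hiT : i ∉ T) (H : Multiset ℕ) :
    M (staircase m (insert i T) k) H ≤
      ENNReal.ofReal (Real.exp (2 * ε)) * M (staircase m T (k + 1)) H := calc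
  _ ≤ ENNReal.ofReal (Real.exp ε) * M (staircase m (insert i T) (k + 1)) H :=
    hM.apply_le staircase_pos staircase_pos sortedL1_staircase_succ H
  _ ≤ ENNReal.ofReal (Real.exp ε) * (ENNReal.ofReal (Real.exp ε) * M (staircase m T (k + 1)) H) :=
    by gcongr; exact hM.apply_le staircase_pos staircase_pos (sortedL1_staircase_insert hi hiT) H
  _ = _ := by
    rw [← mul_assoc, ← ENNReal.ofReal_mul (Real.exp_pos ε).le, ← Real.exp_add, two_mul]

theorem DifferentiallyPrivate.exists_singleton_le (hM : DifferentiallyPrivate ε M) (hε : 0 ≤ ε)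
    {n : ℕ} (hn : 0 < n) :
    ∃ a, n ≤ a ∧ a ≤ n + 1 ∧
      1 ≤ 2 * ENNReal.ofReal (Real.exp (2 * ε)) * expectedError M {a} := by
  set C := ENNReal.ofReal (Real.exp (2 * ε))
  have hpos : ∀ {a}, 0 < a → ∀ b ∈ ({a} : Multiset ℕ), 0 < b := by simp
  have hd : sortedL1 {n + 1} {n} = 1 :=
    sortedL1_eq_one_of_forall_ne (j := 0) (by simp) (fun i hi => by simp [nthLargest_singleton, hi])
      (by simp [nthLargest_singleton])
  have hMC : ∀ H, M {n + 1} H ≤ C * M {n} H := fun H =>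
    (hM.apply_le (hpos (by omega)) (hpos hn) hd H).trans <| by
      gcongr
      exact ENNReal.ofReal_le_ofReal (Real.exp_le_exp.2 (by linarith))
  have hErr (a : ℕ) : coordError M {a} 0 ≤ expectedError M {a} := by
    simpa using sum_coordError_le_expectedError (M := M) (h := {a}) (m := 1) (by simp)
  have hsum : 1 ≤ C * (expectedError M {n} + expectedError M {n + 1}) :=
    (one_le_mul_coordError_add (one_le_ofReal_exp (by linarith)) hMC (i := 0)
      (by simp [nthLargest_singleton])).trans (by gcongr <;> exact hErr _)
  rcases le_total (expectedError M {n}) (expectedError M {n + 1}) with hle | hle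
  · exact ⟨n + 1, by omega, le_rfl, hsum.trans (by rw [mul_comm 2 C, mul_assoc, two_mul]; gcongr)⟩
  · exact ⟨n, le_rfl, by omega, hsum.trans (by rw [mul_comm 2 C, mul_assoc, two_mul]; gcongr)⟩

theorem DifferentiallyPrivate.two_pow_le_sum_coordError_staircase
    (hM : DifferentiallyPrivate ε M) (hε : 0 ≤ ε) {m p i : ℕ} (hmp : m ≤ p) (hi : i < m) :
    2 ^ m ≤ 2 * ENNReal.ofReal (Real.exp (2 * ε)) *
      ∑ T ∈ (range m).powerset, coordError M (staircase m T (p - #T)) i := by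
  set C := ENNReal.ofReal (Real.exp (2 * ε))
  set s := (range m).erase i
  have his : i ∉ s := notMem_erase i _
  have hpair (T) (hT : T ∈ s.powerset) : 1 ≤ C * (coordError M (staircase m T (p - #T)) i +
      coordError M (staircase m (insert i T) (p - #(insert i T))) i) := by
    have hTs := mem_powerset.1 hT
    have hiT : i ∉ T := fun h => his (hTs h)
    have hTm : #T < m := by
      have := card_le_card hTs
      rw [card_erase_of_mem (mem_range.2 hi), card_range] at this
      omega
    have hk : p - #T = p - #(insert i T) + 1 := by rw [card_insert_of_notMem hiT]; omega
    rw [hk]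
    refine one_le_mul_coordError_add (one_le_ofReal_exp (by linarith))
      (hM.apply_staircase_insert_le hi hiT) ?_
    rw [nthLargest_staircase, nthLargest_staircase, if_pos (by omega), if_pos (by omega)]
    simp [stairStep, hi, hiT]
  calc (2 : ℝ≥0∞) ^ m = 2 * ∑ T ∈ s.powerset, 1 := by
        rw [sum_const, card_powerset, card_erase_of_mem (mem_range.2 hi), card_range, nsmul_one,
          Nat.cast_pow, Nat.cast_ofNat, ← pow_succ', Nat.sub_add_cancel (by omega)]
    _ ≤ 2 * ∑ T ∈ s.powerset, C * (coordError M (staircase m T (p - #T)) i +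
          coordError M (staircase m (insert i T) (p - #(insert i T))) i) := by
        gcongr with T hT; exact hpair T hT
    _ = _ := by
        rw [← insert_erase (mem_range.2 hi), sum_powerset_insert his, ← mul_sum, sum_add_distrib,
          mul_assoc]

theorem DifferentiallyPrivate.exists_staircase_le (hM : DifferentiallyPrivate ε M) (hε : 0 ≤ ε)
    {m p : ℕ} (hmp : m ≤ p) :
    ∃ T ⊆ range m, (m : ℝ≥0∞) ≤
      2 * ENNReal.ofReal (Real.exp (2 * ε)) * expectedError M (staircase m T (p - #T)) := by
  set C := ENNReal.ofReal (Real.exp (2 * ε))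
  set E := fun T => expectedError M (staircase m T (p - #T))
  obtain ⟨T₀, hT₀, hmax⟩ := (range m).powerset.exists_max_image E ⟨∅, empty_mem_powerset _⟩
  refine ⟨T₀, mem_powerset.1 hT₀, ?_⟩
  have key : (m : ℝ≥0∞) * 2 ^ m ≤ 2 * C * E T₀ * 2 ^ m := calc
    (m : ℝ≥0∞) * 2 ^ m = ∑ i ∈ range m, 2 ^ m := by simp
    _ ≤ ∑ i ∈ range m, 2 * C *
          ∑ T ∈ (range m).powerset, coordError M (staircase m T (p - #T)) i :=
        sum_le_sum fun i hi => hM.two_pow_le_sum_coordError_staircase hε hmp (mem_range.1 hi)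
    _ = 2 * C * ∑ T ∈ (range m).powerset, ∑ i ∈ range m,
          coordError M (staircase m T (p - #T)) i := by rw [← mul_sum, sum_comm]
    _ ≤ 2 * C * ∑ T ∈ (range m).powerset, E T := by
        gcongr with T
        exact sum_coordError_le_expectedError (by rw [card_staircase]; omega)
    _ ≤ 2 * C * (#(range m).powerset • E T₀) := by gcongr; exact sum_le_card_nsmul _ _ _ hmax
    _ = 2 * C * E T₀ * 2 ^ m := by simp [nsmul_eq_mul]; ring
  exact (ENNReal.mul_le_mul_iff_left (by simp) (by simp)).1 key

end Mechanism

theorem ofReal_mul_exp_neg_le {x t : ℝ} {E : ℝ≥0∞}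
    (hE : ENNReal.ofReal (2 * x) ≤ 2 * ENNReal.ofReal (Real.exp t) * E) :
    ENNReal.ofReal (x * Real.exp (-t)) ≤ E := by
  have hK : ENNReal.ofReal (x * Real.exp (-t)) * (2 * ENNReal.ofReal (Real.exp t)) =
      ENNReal.ofReal (2 * x) := by
    rw [← ENNReal.ofReal_ofNat 2, ← ENNReal.ofReal_mul zero_le_two,
      ← ENNReal.ofReal_mul' (by positivity), Real.exp_neg]
    congr 1
    field_simp
  refine (ENNReal.mul_le_mul_iff_left (c := 2 * ENNReal.ofReal (Real.exp t))
    (by simp [Real.exp_pos]) (ENNReal.mul_ne_top (by simp) ENNReal.ofReal_ne_top)).1 ?_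
  rw [hK, mul_comm E]
  exact hE

theorem sqrt_le_four_mul_max_one (n : ℕ) : Real.sqrt n ≤ 4 * (max (Nat.sqrt n / 2) 1 : ℕ) := by
  have h := Real.real_sqrt_le_nat_sqrt_succ (a := n)
  have : Nat.sqrt n + 1 ≤ 4 * max (Nat.sqrt n / 2) 1 := by omega
  exact h.trans (by exact_mod_cast this)

theorem mul_add_one_add_le_of_two_mul_le_sqrt {m n : ℕ} (hm : 2 * m ≤ Nat.sqrt n) :
    m * (m + 1) + m ≤ n :=
  calc m * (m + 1) + m ≤ 2 * m * (2 * m) := by nlinarith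
    _ ≤ Nat.sqrt n * Nat.sqrt n := Nat.mul_le_mul hm hm
    _ ≤ n := Nat.sqrt_le n

/-- Lower bound in the low privacy regime: there is a universal constant
`c > 0` such that for every `n ≥ 1`, every `ε > 0`, and every
`ε`-differentially private mechanism `M` on anonymized histograms (neighbors:
histograms of positive integers at sorted ℓ1 distance 1), some histogram `h`
with `n ≤ Σ_{a ∈ h} a ≤ n + 1` has expected error
`E_{H ∼ M(h)}[ℓ1(h, H)] ≥ c·√n·e^{−2ε}`. -/
theorem dp_histogram_lower_bound_low_privacy :
    ∃ c : ℝ, 0 < c ∧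
      ∀ n : ℕ, 1 ≤ n → ∀ ε : ℝ, 0 < ε →
        ∀ M : Multiset ℕ → PMF (Multiset ℕ),
          (∀ h h' : Multiset ℕ, (∀ a ∈ h, 0 < a) → (∀ a ∈ h', 0 < a) →
            sortedL1 h h' = 1 →
            ∀ S : Set (Multiset ℕ),
              (M h).toOuterMeasure S ≤
                ENNReal.ofReal (Real.exp ε) * (M h').toOuterMeasure S) →
          ∃ h : Multiset ℕ, (∀ a ∈ h, 0 < a) ∧
            n ≤ h.sum ∧ h.sum ≤ n + 1 ∧
            ENNReal.ofReal (c * Real.sqrt n * Real.exp (-2 * ε)) ≤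
              ∑' H : Multiset ℕ, M h H * (sortedL1 h H : ℝ≥0∞) := by
  refine ⟨1 / 8, by norm_num, fun n hn ε hε M hM => ?_⟩
  set m := Nat.sqrt n / 2
  obtain ⟨h, hpos, hlo, hhi, hErr⟩ : ∃ h : Multiset ℕ, (∀ a ∈ h, 0 < a) ∧ n ≤ h.sum ∧
      h.sum ≤ n + 1 ∧
      ((max m 1 : ℕ) : ℝ≥0∞) ≤ 2 * ENNReal.ofReal (Real.exp (2 * ε)) * expectedError M h := by
    rcases Nat.eq_zero_or_pos m with hm | hm
    · obtain ⟨a, hna, han, hE⟩ := DifferentiallyPrivate.exists_singleton_le hM hε.le hn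
      exact ⟨{a}, by simp; omega, by simpa, by simpa, by simpa [hm] using hE⟩
    · have hmn : m * (m + 1) + m ≤ n := mul_add_one_add_le_of_two_mul_le_sqrt (by omega)
      obtain ⟨T, hT, hE⟩ :=
        DifferentiallyPrivate.exists_staircase_le hM hε.le (m := m) (p := n - m * (m + 1))
          (by omega)
      have hTm : #T ≤ m := by simpa using card_le_card hT
      have hsum : (staircase m T (n - m * (m + 1) - #T)).sum = n := by
        rw [sum_staircase hT]; omega
      exact ⟨_, staircase_pos, hsum.ge, by omega,
        by simpa [max_eq_left (show 1 ≤ m by omega)] using hE⟩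
  refine ⟨h, hpos, hlo, hhi, ?_⟩
  rw [neg_mul]
  refine ofReal_mul_exp_neg_le (le_trans ?_ hErr)
  rw [← ENNReal.ofReal_natCast]
  refine ENNReal.ofReal_le_ofReal ?_
  linarith [sqrt_le_four_mul_max_one n]
end

section
/- Let f : ℕ → ℝ satisfy f(0) = 0 and |f(r+1) − f(r)| ≤ L for every r ≥ 0. Then for any two anonymized histograms h1 and h2, |Σ_{a ∈ h1} f(a) − Σ_{a ∈ h2} f(a)| ≤ L · ℓ1(h1, h2); that is, linear estimators with Lipschitz coefficients are Lipschitz with respect to the sorted ℓ1 distance. -/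
lemma list_sum_eq (f : ℕ → ℝ) (hf0 : f 0 = 0) :
    ∀ (l : List ℕ) (N : ℕ), l.length ≤ N →
      (l.map f).sum = ∑ i ∈ Finset.range N, f (l.getD i 0) := by
  intro l
  induction l with
  | nil =>
    intro N _
    simp [hf0]
  | cons a l ih =>
    intro N hN
    obtain ⟨N', rfl⟩ : ∃ N', N = N' + 1 := by
      cases N with
      | zero => simp at hN
      | succ n => exact ⟨n, rfl⟩
    rw [Finset.sum_range_succ']
    simp only [List.getD_cons_succ, List.getD_cons_zero, List.map_cons, List.sum_cons]
    rw [ih N' (by simpa using hN)]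
    ring

lemma msum_eq (f : ℕ → ℝ) (hf0 : f 0 = 0) (h : Multiset ℕ) (N : ℕ) (hN : h.card ≤ N) :
    (h.map f).sum = ∑ i ∈ Finset.range N, f (nthLargest h i) := by
  have hperm : ((h.sort (· ≤ ·)).reverse : Multiset ℕ) = h := by
    rw [← Multiset.coe_reverse]
    simp [Multiset.sort_eq]
  calc (h.map f).sum = (((h.sort (· ≤ ·)).reverse : Multiset ℕ).map f).sum := by rw [hperm]
    _ = ((h.sort (· ≤ ·)).reverse.map f).sum := by
        rw [Multiset.map_coe, Multiset.sum_coe]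
    _ = ∑ i ∈ Finset.range N, f ((h.sort (· ≤ ·)).reverse.getD i 0) := by
        apply list_sum_eq f hf0
        simpa using hN
    _ = _ := rfl

lemma flip_lip (f : ℕ → ℝ) (L : ℝ) (hlip : ∀ r : ℕ, |f (r + 1) - f r| ≤ L)
    (a b : ℕ) : |f a - f b| ≤ L * ((a : ℤ) - b).natAbs := by
  have key : ∀ (b k : ℕ), |f (b + k) - f b| ≤ L * k := by
    intro b k
    induction k with
    | zero => simpa using (abs_nonneg _).trans (by
        have := (abs_nonneg (f 1 - f 0)).trans (hlip 0)
        simpa using this)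
    | succ k ih =>
      have : f (b + (k + 1)) - f b = (f ((b + k) + 1) - f (b + k)) + (f (b + k) - f b) := by
        rw [show b + (k + 1) = b + k + 1 by ring]
        ring
      calc |f (b + (k + 1)) - f b| ≤ |f ((b + k) + 1) - f (b + k)| + |f (b + k) - f b| := by
            rw [this]; exact abs_add_le _ _
        _ ≤ L + L * k := add_le_add (hlip _) ih
        _ = L * (k + 1 : ℕ) := by push_cast; ring
  rcases le_total b a with hba | hab
  · obtain ⟨k, rfl⟩ := Nat.exists_eq_add_of_le hba
    have := key b k
    have hn : ((b + k : ℕ) : ℤ) - b = k := by push_cast; ring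
    rw [hn]
    simpa using this
  · obtain ⟨k, rfl⟩ := Nat.exists_eq_add_of_le hab
    have := key a k
    have hn : ((a : ℤ) - (a + k : ℕ)) = -k := by push_cast; ring
    rw [hn, abs_sub_comm]
    simpa using this

/-- Linear estimators with Lipschitz coefficients are Lipschitz with respect to
the sorted ℓ1 distance: if `f 0 = 0` and `|f(r+1) − f(r)| ≤ L` for all `r`,
then for any anonymized histograms `h1, h2`,
`|Σ_{a ∈ h1} f(a) − Σ_{a ∈ h2} f(a)| ≤ L·ℓ1(h1, h2)`. -/
theorem linear_estimator_lipschitz (f : ℕ → ℝ) (L : ℝ) (hf0 : f 0 = 0)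
    (hlip : ∀ r : ℕ, |f (r + 1) - f r| ≤ L)
    (h1 h2 : Multiset ℕ) (hp1 : ∀ a ∈ h1, 0 < a) (hp2 : ∀ a ∈ h2, 0 < a) :
    |(h1.map f).sum - (h2.map f).sum| ≤ L * sortedL1 h1 h2 := by
  set N := h1.card + h2.card with hNdef
  rw [msum_eq f hf0 h1 N (Nat.le_add_right _ _),
      msum_eq f hf0 h2 N (Nat.le_add_left _ _), ← Finset.sum_sub_distrib]
  calc |∑ i ∈ Finset.range N, (f (nthLargest h1 i) - f (nthLargest h2 i))|
      ≤ ∑ i ∈ Finset.range N, |f (nthLargest h1 i) - f (nthLargest h2 i)| :=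
        Finset.abs_sum_le_sum_abs _ _
    _ ≤ ∑ i ∈ Finset.range N,
          L * (((nthLargest h1 i : ℤ) - (nthLargest h2 i : ℤ)).natAbs : ℝ) :=
        Finset.sum_le_sum fun i _ => flip_lip f L hlip _ _
    _ = L * sortedL1 h1 h2 := by
        rw [← Finset.mul_sum, sortedL1]
        push_cast
        ring
end
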